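/- The moment generating function of the Hoyt SNR distribution: for 0 < q ≤ 1, γ̄ > 0, and s ≤ 0 (or any real s such that 1 - 2sγ̄ + (2sγ̄q/(1+q²))² > 0 and the integral converges), ∫₀^∞ e^{sγ} · ((1+q²)/(2q γ̄)) · exp(-(1+q²)² γ/(4q² γ̄)) · I₀((1-q⁴) γ/(4q² γ̄)) dγ = 1/√(1 - 2sγ̄ + (2sγ̄ q/(1+q²))²). -/

import Mathlib

/-!
The integrand is `K e^{-rγ} I₀(bγ)` with `|b| < r`. Integrating the power series of `I₀` term
by term, `∫₀^∞ x^{2k} e^{-rx} dx = (2k)!/r^{2k+1}` turns it into `(1/r) ∑ₖ C(2k,k) (b/2r)^{2k}`,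
which the binomial series `(1 - 4t)^{-1/2} = ∑ₖ C(2k,k) tᵏ` sums to `1/√(r² - b²)`. For the
Hoyt parameters, `r² - b² = K² (1 - 2sγ̄ + (2sγ̄q/(1+q²))²)`.
-/

open MeasureTheory Real

/-- Modified Bessel function of the first kind of order 0. -/
noncomputable def besselI0 (x : ℝ) : ℝ :=
  ∑' k : ℕ, (x / 2) ^ (2 * k) / (Nat.factorial k : ℝ) ^ 2

open Set
open scoped Nat

theorem Ring.choose_neg_one_half {K : Type*} [Field K] [CharZero K] (n : ℕ) :
    Ring.choose (-(1 / 2) : K) n = (-(1 / 4)) ^ n * n.centralBinom := by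
  induction n with
  | zero => simp
  | succ n ih =>
    have hrec : ((n + 1 : ℕ) : K) * Ring.choose (-(1 / 2) : K) (n + 1)
        = Ring.choose (-(1 / 2) : K) n * (-(1 / 2) - n) := by
      simpa [Nat.choose_succ_self_right, Ring.choose_one_right, nsmul_eq_mul] using
        Ring.choose_smul_choose (-(1 / 2) : K) (Nat.le_succ n)
    have hcb : ((n + 1 : ℕ) : K) * (n + 1).centralBinom = 2 * (2 * n + 1) * n.centralBinom := by
      exact_mod_cast Nat.succ_mul_centralBinom_succ n
    apply mul_left_cancel₀ (Nat.cast_ne_zero.mpr n.succ_ne_zero : ((n + 1 : ℕ) : K) ≠ 0)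
    rw [hrec, ih, mul_left_comm, hcb]
    ring

theorem Nat.cast_centralBinom_eq_factorial_div {K : Type*} [Field K] [CharZero K] (n : ℕ) :
    (n.centralBinom : K) = (2 * n)! / (n ! : K) ^ 2 := by
  rw [Nat.centralBinom_eq_two_mul_choose, Nat.cast_choose K (by omega : n ≤ 2 * n),
    show 2 * n - n = n by omega, sq]

theorem hasSum_centralBinom_mul_pow {t : ℝ} (ht : |t| < 1 / 4) :
    HasSum (fun n ↦ (n.centralBinom : ℝ) * t ^ n) (1 / √(1 - 4 * t)) := by
  have hmem : -4 * t ∈ Metric.eball (0 : ℝ) 1 := by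
    rw [← ENNReal.ofReal_one, Metric.eball_ofReal, mem_ball_zero_iff, norm_mul, norm_neg,
      norm_eq_abs, norm_eq_abs]
    norm_num
    linarith
  have hcoeff : ∀ n, binomialSeries ℝ (-(1 / 2) : ℝ) n (fun _ ↦ -4 * t)
      = n.centralBinom * t ^ n := by
    intro n
    rw [binomialSeries_apply, List.ofFn_const, List.prod_replicate, Ring.choose_neg_one_half,
      smul_eq_mul, mul_pow, mul_right_comm, ← mul_assoc, ← mul_pow]
    norm_num [mul_comm]
  have hvalue : (1 + (0 + -4 * t)) ^ (-(1 / 2) : ℝ) = 1 / √(1 - 4 * t) := by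
    rw [zero_add, sqrt_eq_rpow, rpow_neg (by linarith [abs_lt.mp ht]), one_div]
    ring_nf
  simpa only [hcoeff, hvalue] using
    (one_add_rpow_hasFPowerSeriesOnBall_zero (a := -(1 / 2))).hasSum hmem

theorem integrableOn_pow_mul_exp_neg_mul_Ioi (n : ℕ) {r : ℝ} (hr : 0 < r) :
    IntegrableOn (fun x ↦ x ^ n * exp (-(r * x))) (Ioi 0) := by
  simpa [rpow_natCast] using
    integrableOn_rpow_mul_exp_neg_mul_rpow (s := n) (by linarith [n.cast_nonneg (α := ℝ)])
      one_pos hr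

theorem integral_pow_mul_exp_neg_mul_Ioi (n : ℕ) {r : ℝ} (hr : 0 < r) :
    ∫ x in Ioi 0, x ^ n * exp (-(r * x)) = n ! / r ^ (n + 1) := by
  have h := integral_rpow_mul_exp_neg_mul_Ioi (a := n + 1) (by positivity) hr
  rw [add_sub_cancel_right, Gamma_nat_eq_factorial, ← Nat.cast_succ, rpow_natCast] at h
  simp only [rpow_natCast] at h
  rw [h, div_pow, one_pow, one_div_mul_eq_div]

theorem integral_exp_neg_mul_besselI0 {b r : ℝ} (hbr : |b| < r) :
    ∫ x in Ioi 0, exp (-(r * x)) * besselI0 (b * x) = 1 / √(r ^ 2 - b ^ 2) := by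
  have hr : 0 < r := (abs_nonneg b).trans_lt hbr
  set F : ℕ → ℝ → ℝ := fun k x ↦
    (b / 2) ^ (2 * k) / (k ! : ℝ) ^ 2 * (x ^ (2 * k) * exp (-(r * x)))
  have hF_nonneg : ∀ k x, 0 ≤ F k x := fun k x ↦
    mul_nonneg (div_nonneg ((even_two_mul k).pow_nonneg _) (by positivity))
      (mul_nonneg ((even_two_mul k).pow_nonneg _) (exp_pos _).le)
  have hF_int : ∀ k, IntegrableOn (F k) (Ioi 0) := fun k ↦
    (integrableOn_pow_mul_exp_neg_mul_Ioi (2 * k) hr).const_mul _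
  set t := (b / (2 * r)) ^ 2 with ht_def
  have ht : |t| < 1 / 4 := by
    rw [abs_of_nonneg (by positivity), ht_def, div_pow,
      div_lt_div_iff₀ (by positivity) (by norm_num)]
    nlinarith [sq_abs b, abs_nonneg b]
  have hF_integral : ∀ k, ∫ x in Ioi 0, F k x = r⁻¹ * ((k.centralBinom : ℝ) * t ^ k) := by
    intro k
    rw [integral_const_mul, integral_pow_mul_exp_neg_mul_Ioi _ hr,
      Nat.cast_centralBinom_eq_factorial_div, ht_def, ← pow_mul, div_pow, div_pow, mul_pow]
    field_simp
    ring
  have hseries : ∀ x, exp (-(r * x)) * besselI0 (b * x) = ∑' k, F k x := by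
    intro x
    rw [besselI0, ← tsum_mul_left]
    congr 1 with k
    ring
  calc ∫ x in Ioi 0, exp (-(r * x)) * besselI0 (b * x)
      = ∑' k, ∫ x in Ioi 0, F k x := by
        simp_rw [hseries]
        refine (integral_tsum_of_summable_integral_norm hF_int ?_).symm
        simp_rw [norm_of_nonneg (hF_nonneg _ _), hF_integral]
        exact (hasSum_centralBinom_mul_pow ht).summable.mul_left _
    _ = r⁻¹ * (1 / √(1 - 4 * t)) := by
        simp_rw [hF_integral]
        rw [tsum_mul_left, (hasSum_centralBinom_mul_pow ht).tsum_eq]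
    _ = 1 / √(r ^ 2 - b ^ 2) := by
        have hpos : 0 < r ^ 2 - b ^ 2 := by nlinarith [sq_abs b, abs_nonneg b]
        rw [show 1 - 4 * t = (r ^ 2 - b ^ 2) / r ^ 2 by rw [ht_def]; field_simp; ring,
          sqrt_div hpos.le, sqrt_sq hr.le]
        field_simp

/-- the MGF of the Hoyt SNR distribution.  For `0 < q ≤ 1`, `γ̄ > 0` and any
real `s` for which the integral converges (the exponential decay rate
`(1+q²)²/(4q²γ̄) - s` must exceed the Bessel growth rate `(1-q⁴)/(4q²γ̄)`, i.e.
`s < (1+q²)/(2γ̄)` since `(1+q²)² - (1-q⁴) = 2q²(1+q²)`),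
`∫₀^∞ e^{sγ} p_γ(γ) dγ = 1/√(1 - 2sγ̄ + (2sγ̄q/(1+q²))²)`. -/
theorem hoyt_mgf (q γbar s : ℝ) (hq : 0 < q) (hq1 : q ≤ 1) (hγ : 0 < γbar)
    (hs : s < (1 + q ^ 2) / (2 * γbar)) :
    ∫ γ in Set.Ioi (0 : ℝ),
        Real.exp (s * γ) * (((1 + q ^ 2) / (2 * q * γbar)) *
          Real.exp (-((1 + q ^ 2) ^ 2 * γ) / (4 * q ^ 2 * γbar)) *
          besselI0 ((1 - q ^ 4) * γ / (4 * q ^ 2 * γbar)))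
      = 1 / Real.sqrt (1 - 2 * s * γbar + (2 * s * γbar * q / (1 + q ^ 2)) ^ 2) := by
  set K := (1 + q ^ 2) / (2 * q * γbar) with hK
  set b := (1 - q ^ 4) / (4 * q ^ 2 * γbar) with hb
  set r := (1 + q ^ 2) ^ 2 / (4 * q ^ 2 * γbar) - s with hr
  have hbr : |b| < r := by
    have hsub : r - b = (1 + q ^ 2) / (2 * γbar) - s := by rw [hr, hb]; field_simp; ring
    have hadd : r + b = (1 + q ^ 2) / (2 * q ^ 2 * γbar) - s := by
      rw [hr, hb]; field_simp; ring
    have hle : (1 + q ^ 2) / (2 * γbar) ≤ (1 + q ^ 2) / (2 * q ^ 2 * γbar) :=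
      div_le_div_of_nonneg_left (by positivity) (by positivity)
        (by nlinarith [pow_le_one₀ hq.le hq1 (n := 2)])
    exact abs_lt.mpr ⟨by linarith, by linarith⟩
  have hdisc : r ^ 2 - b ^ 2
      = K ^ 2 * (1 - 2 * s * γbar + (2 * s * γbar * q / (1 + q ^ 2)) ^ 2) := by
    rw [hr, hb, hK]; field_simp; ring
  have hintegrand : ∀ γ : ℝ,
      exp (s * γ) * (K * exp (-((1 + q ^ 2) ^ 2 * γ) / (4 * q ^ 2 * γbar)) *
        besselI0 ((1 - q ^ 4) * γ / (4 * q ^ 2 * γbar)))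
      = K * (exp (-(r * γ)) * besselI0 (b * γ)) := fun γ ↦ by
    rw [show -(r * γ) = s * γ + -((1 + q ^ 2) ^ 2 * γ) / (4 * q ^ 2 * γbar) by rw [hr]; ring,
      exp_add, show b * γ = (1 - q ^ 4) * γ / (4 * q ^ 2 * γbar) by rw [hb]; ring]
    ring
  have hK_pos : 0 < K := by positivity
  simp_rw [hintegrand]
  rw [integral_const_mul, integral_exp_neg_mul_besselI0 hbr, hdisc, sqrt_mul (sq_nonneg K),
    sqrt_sq hK_pos.le, mul_one_div, div_mul_cancel_left₀ hK_pos.ne', one_div]
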